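/- arXiv:2311.17885 — 3 statements merged into one kernel-verified Lean document; each statement's English description precedes it below -/
import Mathlib

section
/- Let C be a convex subset of a real vector space and L : C → ℝ a convex function. Then for any K ≥ 2 and any ŷ_1, …, ŷ_K ∈ C, the loss of the full ensemble average is bounded by the average of the leave-one-out ensemble losses: L((1/K)∑_{k=1}^K ŷ_k) ≤ (1/K)∑_{j=1}^K L((1/(K−1))∑_{k≠j} ŷ_k). -/
/-!
Each `y k` lies in exactly `K - 1` of the leave-one-out sums, so the full average is the uniform
average of the `K` leave-one-out averages, which lie in `C`. Jensen's inequality for the uniform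
weights `1 / K` is then the claim.
-/

open Finset

theorem Finset.sum_sum_erase {ι M : Type*} [DecidableEq ι] [AddCommMonoid M] (s : Finset ι)
    (f : ι → M) : ∑ j ∈ s, ∑ k ∈ s.erase j, f k = (#s - 1) • ∑ k ∈ s, f k := by
  rw [smul_sum, sum_comm' (t' := s) (s' := fun k => s.erase k)]
  · refine sum_congr rfl fun k hk => ?_
    rw [sum_const, card_erase_of_mem hk]
  · intro j k
    simp only [mem_erase]
    tauto

section

variable {𝕜 E ι : Type*} [Field 𝕜] [AddCommGroup E] [Module 𝕜 E]

theorem Finset.sum_inv_card_sub_one_smul_sum_erase [CharZero 𝕜] [DecidableEq ι] {s : Finset ι}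
    (hs : 1 < #s) (f : ι → E) :
    ∑ j ∈ s, ((#s : 𝕜) - 1)⁻¹ • ∑ k ∈ s.erase j, f k = ∑ k ∈ s, f k := by
  have hne : ((#s : 𝕜) - 1) ≠ 0 := by
    rw [sub_ne_zero]; exact_mod_cast hs.ne'
  rw [← smul_sum, sum_sum_erase, ← Nat.cast_smul_eq_nsmul 𝕜, smul_smul,
    Nat.cast_sub hs.le, Nat.cast_one, inv_mul_cancel₀ hne, one_smul]

variable [LinearOrder 𝕜] [IsStrictOrderedRing 𝕜]

theorem Convex.inv_card_smul_sum_mem {C : Set E} (hC : Convex 𝕜 C) {s : Finset ι}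
    (hs : s.Nonempty) {p : ι → E} (hp : ∀ i ∈ s, p i ∈ C) : (#s : 𝕜)⁻¹ • ∑ i ∈ s, p i ∈ C := by
  rw [smul_sum]
  refine hC.sum_mem (fun _ _ => by positivity) ?_ hp
  rw [sum_const, nsmul_eq_mul, mul_inv_cancel₀ (by simpa using hs.ne_empty)]

theorem ConvexOn.map_inv_card_smul_sum_le {β : Type*} [AddCommGroup β] [PartialOrder β]
    [IsOrderedAddMonoid β] [Module 𝕜 β] [IsStrictOrderedModule 𝕜 β] {C : Set E} {f : E → β}
    (hf : ConvexOn 𝕜 C f) {s : Finset ι} (hs : s.Nonempty) {p : ι → E} (hp : ∀ i ∈ s, p i ∈ C) :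
    f ((#s : 𝕜)⁻¹ • ∑ i ∈ s, p i) ≤ (#s : 𝕜)⁻¹ • ∑ i ∈ s, f (p i) := by
  simpa only [smul_sum] using hf.map_sum_le (fun _ _ => by positivity)
    (by rw [sum_const, nsmul_eq_mul, mul_inv_cancel₀ (by simpa using hs.ne_empty)]) hp

end

theorem ensemble_leave_one_out_general
    {E : Type*} [AddCommGroup E] [Module ℝ E]
    {C : Set E}
    {L : E → ℝ} (hL : ConvexOn ℝ C L)
    {K : ℕ} (hK : 2 ≤ K)
    (y : Fin K → E) (hy : ∀ k, y k ∈ C) :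
    L ((K : ℝ)⁻¹ • ∑ k, y k) ≤
      (K : ℝ)⁻¹ * ∑ j, L (((K : ℝ) - 1)⁻¹ • ∑ k ∈ Finset.univ.erase j, y k) := by
  have hcard : #(univ : Finset (Fin K)) = K := card_fin K
  have hloo_mem (j : Fin K) : ((K : ℝ) - 1)⁻¹ • ∑ k ∈ univ.erase j, y k ∈ C := by
    have hne : (univ.erase j).Nonempty := by
      rw [← card_pos, card_erase_of_mem (mem_univ j), hcard]; omega
    have := hL.1.inv_card_smul_sum_mem hne fun k _ => hy k
    rwa [cast_card_erase_of_mem (mem_univ j), hcard] at this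
  have hmean := sum_inv_card_sub_one_smul_sum_erase (𝕜 := ℝ) (hcard ▸ hK) y
  rw [hcard] at hmean
  calc L ((K : ℝ)⁻¹ • ∑ k, y k)
      = L ((#univ : ℝ)⁻¹ • ∑ j, ((K : ℝ) - 1)⁻¹ • ∑ k ∈ univ.erase j, y k) := by
        rw [hmean, hcard]
    _ ≤ (#univ : ℝ)⁻¹ • ∑ j, L (((K : ℝ) - 1)⁻¹ • ∑ k ∈ univ.erase j, y k) :=
        hL.map_inv_card_smul_sum_le ⟨⟨0, by omega⟩, mem_univ _⟩ fun j _ => hloo_mem j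
    _ = _ := by rw [hcard, smul_eq_mul]

/-- monotonicity lemma. For a convex function `L` on a convex set `C`,
the loss of the full ensemble average is bounded by the average of the
leave-one-out ensemble losses. -/
theorem ensemble_leave_one_out
    {E : Type*} [AddCommGroup E] [Module ℝ E]
    {C : Set E} (hC : Convex ℝ C)
    {L : E → ℝ} (hL : ConvexOn ℝ C L)
    {K : ℕ} (hK : 2 ≤ K)
    (y : Fin K → E) (hy : ∀ k, y k ∈ C) :
    L ((K : ℝ)⁻¹ • ∑ k, y k) ≤
      (K : ℝ)⁻¹ * ∑ j, L (((K : ℝ) - 1)⁻¹ • ∑ k ∈ Finset.univ.erase j, y k) :=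
  ensemble_leave_one_out_general hL hK y hy
end

section
/- Let C be a convex subset of a real normed vector space with norm ‖·‖, let μ > 0, and let L : C → ℝ be μ-strongly convex. Then for any K ≥ 1 and any x_1, …, x_K ∈ C, writing x̄ = (1/K)∑_{j=1}^K x_j, one has the strengthened Jensen inequality L(x̄) ≤ (1/K)∑_{k=1}^K L(x_k) − μ·(1/K)∑_{k=1}^K ‖x_k − x̄‖². -/
/-!
Apply the modulus inequality to each `x k` and the mean `x̄`, at the point `t • x k + (1 - t) • x̄`.
These points again average to `x̄`, so Jensen's inequality bounds `L x̄` by the average of their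
values, i.e. by `t avg L + (1 - t) L x̄ - t (1 - t) μ avg ‖x k - x̄‖²`. Cancelling `t` and letting
`t → 0⁺` gives the claim.
-/

open Finset Filter Set Topology

lemma le_of_forall_mem_Ioc_le_add_mul {x y c : ℝ} (h : ∀ a ∈ Ioc (0 : ℝ) 1, x ≤ y + a * c) :
    x ≤ y := by
  have hlim : Tendsto (fun a : ℝ => y + a * c) (𝓝[>] 0) (𝓝 (y + 0 * c)) :=
    (Continuous.tendsto (by fun_prop) 0).mono_left nhdsWithin_le_nhds
  simpa using ge_of_tendsto hlim (eventually_of_mem (Ioc_mem_nhdsGT one_pos) h)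

section

variable {E ι : Type*} [NormedAddCommGroup E] [NormedSpace ℝ E] {s : Set E} {φ : ℝ → ℝ}
  {f : E → ℝ} {t : Finset ι} {w : ι → ℝ} {p : ι → E}

lemma UniformConvexOn.map_sum_le_sub_one_sub_mul (hf : UniformConvexOn s φ f) (hφ : 0 ≤ φ)
    (h₀ : ∀ i ∈ t, 0 ≤ w i) (h₁ : ∑ i ∈ t, w i = 1) (hmem : ∀ i ∈ t, p i ∈ s)
    {a : ℝ} (ha : a ∈ Ioc (0 : ℝ) 1) :
    f (∑ i ∈ t, w i • p i) ≤ ∑ i ∈ t, w i • f (p i)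
      - (1 - a) * ∑ i ∈ t, w i • φ ‖p i - ∑ j ∈ t, w j • p j‖ := by
  set m := ∑ j ∈ t, w j • p j with hm_def
  have hm : m ∈ s := hf.1.sum_mem h₀ h₁ hmem
  have hmean : ∑ i ∈ t, w i • (a • p i + (1 - a) • m) = m := by
    have hp : ∑ i ∈ t, w i • a • p i = a • m := by simp_rw [hm_def, smul_sum, smul_comm a]
    simp only [smul_add]
    rw [sum_add_distrib, hp, ← sum_smul, h₁, one_smul, ← add_smul, add_sub_cancel, one_smul]
  have hjensen := (hf.convexOn hφ).map_sum_le h₀ h₁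
    fun i hi => hf.1 (hmem i hi) hm ha.1.le (sub_nonneg.2 ha.2) (add_sub_cancel a 1)
  rw [hmean] at hjensen
  have hmodulus : ∑ i ∈ t, w i • f (a • p i + (1 - a) • m) ≤
      ∑ i ∈ t, w i • (a • f (p i) + (1 - a) • f m - a * (1 - a) * φ ‖p i - m‖) :=
    sum_le_sum fun i hi => smul_le_smul_of_nonneg_left
      (hf.2 (hmem i hi) hm ha.1.le (sub_nonneg.2 ha.2) (add_sub_cancel a 1)) (h₀ i hi)
  have hsum : ∑ i ∈ t, w i • (a • f (p i) + (1 - a) • f m - a * (1 - a) * φ ‖p i - m‖) =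
      a * ∑ i ∈ t, w i • f (p i) + (1 - a) * f m
        - a * (1 - a) * ∑ i ∈ t, w i • φ ‖p i - m‖ := by
    calc _ = ∑ i ∈ t, (a * (w i • f (p i)) + w i * ((1 - a) * f m)
            - a * (1 - a) * (w i • φ ‖p i - m‖)) :=
          sum_congr rfl fun i _ => by simp only [smul_eq_mul]; ring
      _ = _ := by
          rw [sum_sub_distrib, sum_add_distrib, ← mul_sum, ← sum_mul, h₁, ← mul_sum, one_mul]
  exact le_of_mul_le_mul_left (by linarith [hjensen.trans (hmodulus.trans_eq hsum)]) ha.1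

lemma UniformConvexOn.map_sum_le_sub (hf : UniformConvexOn s φ f) (hφ : 0 ≤ φ)
    (h₀ : ∀ i ∈ t, 0 ≤ w i) (h₁ : ∑ i ∈ t, w i = 1) (hmem : ∀ i ∈ t, p i ∈ s) :
    f (∑ i ∈ t, w i • p i) ≤ ∑ i ∈ t, w i • f (p i)
      - ∑ i ∈ t, w i • φ ‖p i - ∑ j ∈ t, w j • p j‖ :=
  le_of_forall_mem_Ioc_le_add_mul (c := ∑ i ∈ t, w i • φ ‖p i - ∑ j ∈ t, w j • p j‖) fun _ ha =>
    (hf.map_sum_le_sub_one_sub_mul hφ h₀ h₁ hmem ha).trans_eq (by ring)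

lemma StrongConvexOn.map_sum_le_sub {m : ℝ} (hf : StrongConvexOn s m f) (hm : 0 ≤ m)
    (h₀ : ∀ i ∈ t, 0 ≤ w i) (h₁ : ∑ i ∈ t, w i = 1) (hmem : ∀ i ∈ t, p i ∈ s) :
    f (∑ i ∈ t, w i • p i) ≤ ∑ i ∈ t, w i * f (p i)
      - m / 2 * ∑ i ∈ t, w i * ‖p i - ∑ j ∈ t, w j • p j‖ ^ 2 := by
  have := UniformConvexOn.map_sum_le_sub hf (fun r => by positivity) h₀ h₁ hmem
  simpa only [smul_eq_mul, mul_sum, mul_left_comm] using this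

/-- Mathlib's `m`-strong convexity has modulus `m / 2 * r ^ 2`, hence the factor `2`. -/
lemma strongConvexOn_two_mul_of_forall_mem_Icc {μ : ℝ} (hs : Convex ℝ s)
    (hf : ∀ x ∈ s, ∀ y ∈ s, ∀ t ∈ Icc (0 : ℝ) 1,
      f (t • x + (1 - t) • y) ≤ t * f x + (1 - t) * f y - μ * t * (1 - t) * ‖x - y‖ ^ 2) :
    StrongConvexOn s (2 * μ) f := by
  refine ⟨hs, fun x hx y hy a b ha hb hab => ?_⟩
  obtain rfl : b = 1 - a := by linarith
  have := hf x hx y hy a ⟨ha, by linarith⟩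
  simp only [smul_eq_mul]
  linarith

end

/-- strengthened Jensen inequality for a `μ`-strongly convex
function on a convex subset of a normed vector space. -/
theorem strong_convexity_jensen
    {E : Type*} [NormedAddCommGroup E] [NormedSpace ℝ E]
    {C : Set E} (hC : Convex ℝ C)
    {μ : ℝ} (hμ : 0 < μ)
    {L : E → ℝ}
    (hL : ∀ x ∈ C, ∀ y ∈ C, ∀ t ∈ Set.Icc (0 : ℝ) 1,
      L (t • x + (1 - t) • y) ≤ t * L x + (1 - t) * L y - μ * t * (1 - t) * ‖x - y‖ ^ 2)
    {K : ℕ} (hK : 1 ≤ K)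
    (x : Fin K → E) (hx : ∀ k, x k ∈ C) :
    L ((K : ℝ)⁻¹ • ∑ j, x j) ≤
      (K : ℝ)⁻¹ * ∑ k, L (x k)
        - μ * ((K : ℝ)⁻¹ * ∑ k, ‖x k - (K : ℝ)⁻¹ • ∑ j, x j‖ ^ 2) := by
  have hweights : ∑ _k : Fin K, (K : ℝ)⁻¹ = 1 := by
    rw [sum_const, card_univ, Fintype.card_fin, nsmul_eq_mul,
      mul_inv_cancel₀ (Nat.cast_ne_zero.2 (by omega))]
  have := (strongConvexOn_two_mul_of_forall_mem_Icc hC hL).map_sum_le_sub (by positivity)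
    (fun _ _ => by positivity) hweights fun k _ => hx k
  simp only [← smul_sum, ← mul_sum] at this
  linarith
end

section
/- Let ŷ_1, …, ŷ_K (K ≥ 2) be exchangeable random vectors in ℝ^d with common covariance matrix Σ that is positive definite, and let ρ = tr(Cov(ŷ_1, ŷ_2))/tr(Σ). If L : ℝ^d → ℝ is μ-strongly convex (with respect to the Euclidean norm) and all expectations below exist, then E[L((1/K)∑_{k=1}^K ŷ_k)] ≤ E[L((1/(K−1))∑_{k=1}^{K−1} ŷ_k)] − (μ/(K(K−1)))·(1−ρ)·tr(Σ). -/
/-!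
Subtracting `μ‖·‖²` from a `μ`-strongly convex `L` leaves a convex function `g`. The mean of
`K` members is the uniform average of the `K` leave-one-out means, each of which is distributed,
by exchangeability, like the mean of the first `K - 1` members; Jensen's inequality therefore gives
`E g(ȳ_K) ≤ E g(ȳ_{K-1})`. The quadratic terms are explicit: with `B = E‖ŷ₁‖²` and
`A = E⟪ŷ₁, ŷ₂⟫`, exchangeability gives `E‖ȳ_n‖² = A + (B - A) / n`, and
`B - A = tr Σ - tr Cov(ŷ₁, ŷ₂) = (1 - ρ) tr Σ`.
-/

open MeasureTheory ProbabilityTheory Finset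
open scoped InnerProductSpace

lemma convexOn_sub_mul_norm_sq {E : Type*} [NormedAddCommGroup E] [InnerProductSpace ℝ E]
    {μ : ℝ} {L : E → ℝ}
    (hL : ∀ x z, ∀ t ∈ Set.Icc (0 : ℝ) 1,
      L (t • x + (1 - t) • z) ≤ t * L x + (1 - t) * L z - μ * t * (1 - t) * ‖x - z‖ ^ 2) :
    ConvexOn ℝ Set.univ fun x ↦ L x - μ * ‖x‖ ^ 2 := by
  have hstrong : StrongConvexOn Set.univ (2 * μ) L := by
    refine ⟨convex_univ, fun x _ z _ a b ha hb hab ↦ ?_⟩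
    obtain rfl : b = 1 - a := by linarith
    have := hL x z a ⟨ha, by linarith⟩
    simp only [smul_eq_mul]
    linarith
  simpa using strongConvexOn_iff_convex.mp hstrong

lemma Fin.sum_sum_succAbove {M : Type*} [AddCommGroup M] {n : ℕ} (x : Fin (n + 1) → M) :
    ∑ j : Fin (n + 1), ∑ i : Fin n, x (j.succAbove i) = n • ∑ i, x i := by
  have h (j : Fin (n + 1)) : ∑ i : Fin n, x (j.succAbove i) = ∑ i, x i - x j :=
    eq_sub_of_add_eq' (Fin.sum_univ_succAbove x j).symm
  simp only [h, sum_sub_distrib, sum_const, succ_nsmul, add_sub_cancel_right]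

lemma ConvexOn.map_average_le_average_map_succAbove {E : Type*} [AddCommGroup E] [Module ℝ E]
    {g : E → ℝ} (hg : ConvexOn ℝ Set.univ g) {n : ℕ} (hn : n ≠ 0) (x : Fin (n + 1) → E) :
    g (((n : ℝ) + 1)⁻¹ • ∑ i, x i) ≤
      ((n : ℝ) + 1)⁻¹ * ∑ j : Fin (n + 1), g ((n : ℝ)⁻¹ • ∑ i : Fin n, x (j.succAbove i)) := by
  have hsplit : ((n : ℝ) + 1)⁻¹ • ∑ i, x i =
      ∑ j : Fin (n + 1), ((n : ℝ) + 1)⁻¹ • ((n : ℝ)⁻¹ • ∑ i : Fin n, x (j.succAbove i)) := by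
    rw [← smul_sum, ← smul_sum, Fin.sum_sum_succAbove, ← Nat.cast_smul_eq_nsmul ℝ, smul_smul,
      smul_smul, mul_assoc, inv_mul_cancel₀ (Nat.cast_ne_zero.mpr hn), mul_one]
  rw [hsplit, mul_sum]
  refine hg.map_sum_le (fun _ _ ↦ by positivity) ?_ (fun _ _ ↦ Set.mem_univ _)
  simp only [sum_const, card_univ, Fintype.card_fin, nsmul_eq_mul]
  push_cast
  field_simp

lemma Matrix.PosDef.one_sub_div_trace_mul_trace {ι : Type*} [Fintype ι] {S : Matrix ι ι ℝ}
    (hS : S.PosDef) (C : Matrix ι ι ℝ) :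
    (1 - C.trace / S.trace) * S.trace = S.trace - C.trace := by
  cases isEmpty_or_nonempty ι
  · simp [Matrix.trace]
  · rw [sub_mul, one_mul, div_mul_cancel₀ _ hS.trace_pos.ne']

section

variable {Ω : Type*} [MeasurableSpace Ω] {P : Measure Ω}

noncomputable def ensembleMean {E : Type*} [AddCommMonoid E] [Module ℝ E]
    (y : ℕ → Ω → E) (n : ℕ) (ω : Ω) : E :=
  (n : ℝ)⁻¹ • ∑ k ∈ range n, y k ω

section InnerProductSpace

variable {E : Type*} [NormedAddCommGroup E] [InnerProductSpace ℝ E]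

lemma integrable_inner_of_memLp_two {X Y : Ω → E} (hX : MemLp X 2 P) (hY : MemLp Y 2 P) :
    Integrable (fun ω ↦ ⟪X ω, Y ω⟫_ℝ) P :=
  (L2.integrable_inner (𝕜 := ℝ) hX.toLp hY.toLp).congr <| by
    filter_upwards [hX.coeFn_toLp, hY.coeFn_toLp] with ω hXω hYω
    rw [hXω, hYω]

lemma memLp_ensembleMean {y : ℕ → Ω → E} {p : ENNReal} (hy : ∀ k, MemLp (y k) p P) (n : ℕ) :
    MemLp (ensembleMean y n) p P :=
  (memLp_finsetSum _ fun k _ ↦ hy k).const_smul _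

lemma integral_norm_sq_ensembleMean_of_integral_inner {y : ℕ → Ω → E} {n : ℕ} (hn : n ≠ 0)
    {A B : ℝ} (hint : ∀ k l, Integrable (fun ω ↦ ⟪y k ω, y l ω⟫_ℝ) P)
    (hdiag : ∀ k < n, ∫ ω, ⟪y k ω, y k ω⟫_ℝ ∂P = B)
    (hoff : ∀ k < n, ∀ l < n, k ≠ l → ∫ ω, ⟪y k ω, y l ω⟫_ℝ ∂P = A) :
    ∫ ω, ‖ensembleMean y n ω‖ ^ 2 ∂P = A + (B - A) / n := by
  have hexpand (ω : Ω) : ‖ensembleMean y n ω‖ ^ 2 =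
      ((n : ℝ) ^ 2)⁻¹ * ∑ k ∈ range n, ∑ l ∈ range n, ⟪y k ω, y l ω⟫_ℝ := by
    rw [ensembleMean, norm_smul, mul_pow, Real.norm_eq_abs, sq_abs, inv_pow,
      ← real_inner_self_eq_norm_sq, sum_inner]
    simp_rw [inner_sum]
  have hrow : ∀ k ∈ range n, ∑ l ∈ range n, ∫ ω, ⟪y k ω, y l ω⟫_ℝ ∂P = B + (n - 1) * A := by
    intro k hk
    rw [mem_range] at hk
    have hentry : ∀ l ∈ range n, ∫ ω, ⟪y k ω, y l ω⟫_ℝ ∂P = A + if k = l then B - A else 0 := by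
      intro l hl
      rw [mem_range] at hl
      split_ifs with hkl
      · subst hkl; rw [hdiag k hk]; ring
      · rw [hoff k hk l hl hkl, add_zero]
    rw [sum_congr rfl hentry, sum_add_distrib, sum_ite_eq, if_pos (mem_range.mpr hk)]
    simp only [sum_const, card_range, nsmul_eq_mul]
    ring
  simp_rw [hexpand]
  rw [integral_const_mul, integral_finsetSum _ fun k _ ↦ integrable_finsetSum _ fun l _ ↦ hint k l]
  simp_rw [integral_finsetSum _ fun l _ ↦ hint _ l]
  rw [sum_congr rfl hrow, sum_const, card_range, nsmul_eq_mul]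
  field_simp
  ring

end InnerProductSpace

lemma sum_covariance_eq_integral_inner_sub [IsProbabilityMeasure P] {ι : Type*} [Fintype ι]
    {X Y : Ω → EuclideanSpace ℝ ι} (hX : MemLp X 2 P) (hY : MemLp Y 2 P) :
    ∑ i, cov[fun ω ↦ X ω i, fun ω ↦ Y ω i; P] =
      ∫ ω, ⟪X ω, Y ω⟫_ℝ ∂P - ∑ i, (∫ ω, X ω i ∂P) * ∫ ω, Y ω i ∂P := by
  have hcoord {Z : Ω → EuclideanSpace ℝ ι} (hZ : MemLp Z 2 P) (i : ι) :
      MemLp (fun ω ↦ Z ω i) 2 P :=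
    (EuclideanSpace.proj (𝕜 := ℝ) i).comp_memLp' hZ
  have hinner (ω : Ω) : ⟪X ω, Y ω⟫_ℝ = ∑ i, X ω i * Y ω i := by
    simp [PiLp.inner_apply, mul_comm]
  have hprod (i : ι) : Integrable (fun ω ↦ X ω i * Y ω i) P :=
    (hcoord hX i).integrable_mul (hcoord hY i)
  simp_rw [covariance_eq_sub (hcoord hX _) (hcoord hY _), hinner, Pi.mul_apply]
  rw [integral_finsetSum _ fun i _ ↦ hprod i, sum_sub_distrib]

def Exchangeable {E : Type*} [MeasurableSpace E] (y : ℕ → Ω → E) (K : ℕ) (P : Measure Ω) :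
    Prop :=
  ∀ σ : Equiv.Perm (Fin K),
    Measure.map (fun ω i ↦ y (σ i) ω) P = Measure.map (fun ω (i : Fin K) ↦ y i ω) P

namespace Exchangeable

section

variable {E : Type*} [MeasurableSpace E] {y : ℕ → Ω → E} {K : ℕ}

theorem identDistrib_comp (h : Exchangeable y K P)
    (hy : ∀ k, AEMeasurable (y k) P) {α : Type*} [Finite α] {f g : α → Fin K}
    (hf : f.Injective) (hg : g.Injective) :
    IdentDistrib (fun ω a ↦ y (f a) ω) (fun ω a ↦ y (g a) ω) P P := by
  obtain ⟨σ, hσ⟩ := Equiv.Perm.exists_extending_pair g f hg hf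
  have hperm : IdentDistrib (fun ω i ↦ y (σ i) ω) (fun ω (i : Fin K) ↦ y i ω) P P :=
    ⟨aemeasurable_pi_lambda _ fun _ ↦ hy _, aemeasurable_pi_lambda _ fun _ ↦ hy _, h σ⟩
  simpa only [Function.comp_def, hσ] using
    hperm.comp (u := fun v a ↦ v (g a)) (measurable_pi_lambda _ fun a ↦ measurable_pi_apply (g a))

theorem identDistrib (h : Exchangeable y K P) (hy : ∀ k, AEMeasurable (y k) P)
    {k l : ℕ} (hk : k < K) (hl : l < K) : IdentDistrib (y k) (y l) P P :=
  (h.identDistrib_comp hy (α := Unit) (f := fun _ ↦ ⟨k, hk⟩) (g := fun _ ↦ ⟨l, hl⟩)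
    (fun _ _ _ ↦ rfl) (fun _ _ _ ↦ rfl)).comp (measurable_pi_apply ())

theorem identDistrib_pair (h : Exchangeable y K P) (hy : ∀ k, AEMeasurable (y k) P)
    {k l : ℕ} (hk : k < K) (hl : l < K) (hkl : k ≠ l) :
    IdentDistrib (fun ω ↦ (y k ω, y l ω)) (fun ω ↦ (y 0 ω, y 1 ω)) P P := by
  have hinj {a b : Fin K} (hab : a ≠ b) : (![a, b]).Injective := by
    intro i j
    fin_cases i <;> fin_cases j <;> simp [hab, hab.symm]
  have := h.identDistrib_comp hy (hinj (a := ⟨k, hk⟩) (b := ⟨l, hl⟩) (by simpa using hkl))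
    (hinj (a := ⟨0, by omega⟩) (b := ⟨1, by omega⟩) (by simp))
  exact this.comp (u := fun v ↦ (v 0, v 1)) (by fun_prop)

theorem identDistrib_sum_succAbove [AddCommMonoid E] [MeasurableAdd₂ E] {n : ℕ}
    (h : Exchangeable y (n + 1) P) (hy : ∀ k, AEMeasurable (y k) P) (j : Fin (n + 1)) :
    IdentDistrib (fun ω ↦ ∑ i : Fin n, y (j.succAbove i) ω) (fun ω ↦ ∑ k ∈ range n, y k ω)
      P P := by
  have := (h.identDistrib_comp hy (Fin.succAbove_right_injective (p := j))
    (Fin.castSucc_injective n)).comp (u := fun v ↦ ∑ i, v i)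
    (Finset.measurable_sum _ fun i _ ↦ measurable_pi_apply i)
  have hrange (ω : Ω) : ∑ i : Fin n, y i ω = ∑ k ∈ range n, y k ω :=
    Fin.sum_univ_eq_sum_range (y · ω) n
  simpa only [Function.comp_def, Fin.val_castSucc, hrange] using this

end

theorem trace_sub_trace_eq [IsProbabilityMeasure P] {ι : Type*} [Fintype ι]
    {y : ℕ → Ω → EuclideanSpace ℝ ι} {K : ℕ} (h : Exchangeable y K P) (hK : 2 ≤ K)
    (hy : ∀ k, MemLp (y k) 2 P) {m : EuclideanSpace ℝ ι} (hm : ∀ i, m i = ∫ ω, y 0 ω i ∂P)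
    {S C : Matrix ι ι ℝ} (hS : ∀ i, S i i = ∫ ω, (y 0 ω i - m i) * (y 0 ω i - m i) ∂P)
    (hC : ∀ i, C i i = ∫ ω, (y 0 ω i - m i) * (y 1 ω i - m i) ∂P) :
    S.trace - C.trace = ∫ ω, ⟪y 0 ω, y 0 ω⟫_ℝ ∂P - ∫ ω, ⟪y 0 ω, y 1 ω⟫_ℝ ∂P := by
  have hmean i : ∫ ω, y 1 ω i ∂P = m i := by
    rw [hm]
    exact ((h.identDistrib (fun k ↦ (hy k).aestronglyMeasurable.aemeasurable)
      (k := 1) (l := 0) (by omega) (by omega)).comp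
      (u := fun x : EuclideanSpace ℝ ι ↦ x i) (by fun_prop)).integral_eq
  have hStr : S.trace = ∑ i, cov[fun ω ↦ y 0 ω i, fun ω ↦ y 0 ω i; P] := by
    simp [Matrix.trace, hS, covariance, hm]
  have hCtr : C.trace = ∑ i, cov[fun ω ↦ y 0 ω i, fun ω ↦ y 1 ω i; P] := by
    simp [Matrix.trace, hC, covariance, hm, hmean]
  rw [hStr, hCtr, sum_covariance_eq_integral_inner_sub (hy 0) (hy 0),
    sum_covariance_eq_integral_inner_sub (hy 0) (hy 1)]
  simp only [hmean, ← hm]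
  ring

variable {E : Type*} [NormedAddCommGroup E] [MeasurableSpace E] [BorelSpace E]
  [SecondCountableTopology E] {y : ℕ → Ω → E}

theorem integral_comp_ensembleMean_succ_le [NormedSpace ℝ E] {n : ℕ} (hn : n ≠ 0)
    (h : Exchangeable y (n + 1) P) (hy : ∀ k, AEMeasurable (y k) P) {g : E → ℝ}
    (hg : ConvexOn ℝ Set.univ g) (hgm : Measurable g)
    (hint₁ : Integrable (fun ω ↦ g (ensembleMean y (n + 1) ω)) P)
    (hint₂ : Integrable (fun ω ↦ g (ensembleMean y n ω)) P) :
    ∫ ω, g (ensembleMean y (n + 1) ω) ∂P ≤ ∫ ω, g (ensembleMean y n ω) ∂P := by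
  set loo : Fin (n + 1) → Ω → E := fun j ω ↦ (n : ℝ)⁻¹ • ∑ i : Fin n, y (j.succAbove i) ω
  have hloo (j : Fin (n + 1)) :
      IdentDistrib (fun ω ↦ g (loo j ω)) (fun ω ↦ g (ensembleMean y n ω)) P P :=
    (h.identDistrib_sum_succAbove hy j).comp (hgm.comp (measurable_const_smul _))
  have hjensen (ω : Ω) :
      g (ensembleMean y (n + 1) ω) ≤ ((n : ℝ) + 1)⁻¹ * ∑ j, g (loo j ω) := by
    rw [ensembleMean, ← Fin.sum_univ_eq_sum_range (y · ω), Nat.cast_add_one]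
    exact hg.map_average_le_average_map_succAbove hn fun i ↦ y i ω
  have hloo_int (j : Fin (n + 1)) : Integrable (fun ω ↦ g (loo j ω)) P :=
    (hloo j).integrable_iff.mpr hint₂
  calc ∫ ω, g (ensembleMean y (n + 1) ω) ∂P
      ≤ ∫ ω, ((n : ℝ) + 1)⁻¹ * ∑ j, g (loo j ω) ∂P :=
        integral_mono hint₁ ((integrable_finsetSum _ fun j _ ↦ hloo_int j).const_mul _) hjensen
    _ = ((n : ℝ) + 1)⁻¹ * ∑ j : Fin (n + 1), ∫ ω, g (loo j ω) ∂P := by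
        rw [integral_const_mul, integral_finsetSum _ fun j _ ↦ hloo_int j]
    _ = ∫ ω, g (ensembleMean y n ω) ∂P := by
        simp only [(hloo _).integral_eq, sum_const, card_univ, Fintype.card_fin, nsmul_eq_mul]
        push_cast
        field_simp

theorem integral_norm_sq_ensembleMean [InnerProductSpace ℝ E] {K n : ℕ}
    (h : Exchangeable y K P) (hy : ∀ k, MemLp (y k) 2 P) (hn : n ≠ 0) (hnK : n ≤ K) :
    ∫ ω, ‖ensembleMean y n ω‖ ^ 2 ∂P =
      ∫ ω, ⟪y 0 ω, y 1 ω⟫_ℝ ∂P + (∫ ω, ⟪y 0 ω, y 0 ω⟫_ℝ ∂P - ∫ ω, ⟪y 0 ω, y 1 ω⟫_ℝ ∂P) / n := by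
  have hy' k : AEMeasurable (y k) P := (hy k).aestronglyMeasurable.aemeasurable
  refine integral_norm_sq_ensembleMean_of_integral_inner hn
    (fun k l ↦ integrable_inner_of_memLp_two (hy k) (hy l)) (fun k hk ↦ ?_)
    (fun k hk l hl hkl ↦ ?_)
  · exact ((h.identDistrib hy' (by omega) (by omega)).comp
      (u := fun x ↦ ⟪x, x⟫_ℝ) (by fun_prop)).integral_eq
  · exact ((h.identDistrib_pair hy' (by omega) (by omega) hkl).comp
      (u := fun p ↦ ⟪p.1, p.2⟫_ℝ) (by fun_prop)).integral_eq

theorem integral_comp_ensembleMean_succ_le_sub [InnerProductSpace ℝ E] [FiniteDimensional ℝ E]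
    {n : ℕ} (hn : n ≠ 0) (h : Exchangeable y (n + 1) P) (hy : ∀ k, MemLp (y k) 2 P)
    {μ : ℝ} {L : E → ℝ} (hL : ConvexOn ℝ Set.univ fun x ↦ L x - μ * ‖x‖ ^ 2)
    (hint₁ : Integrable (fun ω ↦ L (ensembleMean y (n + 1) ω)) P)
    (hint₂ : Integrable (fun ω ↦ L (ensembleMean y n ω)) P) :
    ∫ ω, L (ensembleMean y (n + 1) ω) ∂P ≤ ∫ ω, L (ensembleMean y n ω) ∂P -
      μ / (((n + 1 : ℕ) : ℝ) * n) * (∫ ω, ⟪y 0 ω, y 0 ω⟫_ℝ ∂P - ∫ ω, ⟪y 0 ω, y 1 ω⟫_ℝ ∂P) := by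
  have hnorm_int j : Integrable (fun ω ↦ μ * ‖ensembleMean y j ω‖ ^ 2) P :=
    ((memLp_ensembleMean hy j).integrable_norm_pow two_ne_zero).const_mul μ
  have hmono : ∫ ω, (L (ensembleMean y (n + 1) ω) - μ * ‖ensembleMean y (n + 1) ω‖ ^ 2) ∂P ≤
      ∫ ω, (L (ensembleMean y n ω) - μ * ‖ensembleMean y n ω‖ ^ 2) ∂P :=
    h.integral_comp_ensembleMean_succ_le hn (fun k ↦ (hy k).aestronglyMeasurable.aemeasurable) hL
      (continuousOn_univ.mp (hL.continuousOn isOpen_univ)).measurable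
      (hint₁.sub (hnorm_int _)) (hint₂.sub (hnorm_int _))
  rw [integral_sub hint₁ (hnorm_int _), integral_sub hint₂ (hnorm_int _), integral_const_mul,
    integral_const_mul, h.integral_norm_sq_ensembleMean hy (n := n + 1) (by omega) le_rfl,
    h.integral_norm_sq_ensembleMean hy hn (by omega)] at hmono
  have hgap (D : ℝ) : μ / (((n + 1 : ℕ) : ℝ) * n) * D =
      μ * (D / n) - μ * (D / ((n + 1 : ℕ) : ℝ)) := by
    field_simp
    push_cast
    ring
  rw [hgap]
  linarith

end Exchangeable

end

theorem ensemble_strict_monotone_strongly_convex_general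
    {Ω : Type*} [MeasureSpace Ω] [IsProbabilityMeasure (ℙ : Measure Ω)]
    {d K : ℕ} (hK : 2 ≤ K)
    (y : ℕ → Ω → EuclideanSpace ℝ (Fin d))
    (hexch : ∀ σ : Equiv.Perm (Fin K),
      Measure.map (fun ω => fun i : Fin K => y (σ i) ω) ℙ =
        Measure.map (fun ω => fun i : Fin K => y i ω) ℙ)
    (hL2 : ∀ k, MemLp (y k) 2 ℙ)
    (m : EuclideanSpace ℝ (Fin d)) (hm : ∀ i, m i = ∫ ω, y 0 ω i)
    (S : Matrix (Fin d) (Fin d) ℝ)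
    (hS : ∀ i j, S i j = ∫ ω, (y 0 ω i - m i) * (y 0 ω j - m j))
    (hSpos : S.PosDef)
    (Scross : Matrix (Fin d) (Fin d) ℝ)
    (hScross : ∀ i j, Scross i j = ∫ ω, (y 0 ω i - m i) * (y 1 ω j - m j))
    (ρ : ℝ) (hρ : ρ = Scross.trace / S.trace)
    {μ : ℝ}
    {L : EuclideanSpace ℝ (Fin d) → ℝ}
    (hL : ∀ x z, ∀ t ∈ Set.Icc (0 : ℝ) 1,
      L (t • x + (1 - t) • z) ≤ t * L x + (1 - t) * L z - μ * t * (1 - t) * ‖x - z‖ ^ 2)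
    (hint₁ : Integrable (fun ω => L ((K : ℝ)⁻¹ • ∑ k ∈ Finset.range K, y k ω)))
    (hint₂ : Integrable
      (fun ω => L (((K : ℝ) - 1)⁻¹ • ∑ k ∈ Finset.range (K - 1), y k ω))) :
    (∫ ω, L ((K : ℝ)⁻¹ • ∑ k ∈ Finset.range K, y k ω)) ≤
      (∫ ω, L (((K : ℝ) - 1)⁻¹ • ∑ k ∈ Finset.range (K - 1), y k ω))
        - μ / ((K : ℝ) * ((K : ℝ) - 1)) * (1 - ρ) * S.trace := by
  have hexch : Exchangeable y K ℙ := hexch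
  rw [mul_assoc, hρ, hSpos.one_sub_div_trace_mul_trace,
    hexch.trace_sub_trace_eq hK hL2 hm (fun i ↦ hS i i) (fun i ↦ hScross i i)]
  obtain ⟨n, rfl⟩ : ∃ n, K = n + 1 := ⟨K - 1, by omega⟩
  have hcast : ((n + 1 : ℕ) : ℝ) - 1 = n := by push_cast; ring
  rw [Nat.add_sub_cancel, hcast] at hint₂ ⊢
  exact hexch.integral_comp_ensembleMean_succ_le_sub (by omega) hL2 (convexOn_sub_mul_norm_sq hL)
    hint₁ hint₂

/-- strict monotonicity of the expected ensemble loss for a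
`μ`-strongly convex loss and an exchangeable ensemble with positive definite
covariance matrix. -/
theorem ensemble_strict_monotone_strongly_convex
    {Ω : Type*} [MeasureSpace Ω] [IsProbabilityMeasure (ℙ : Measure Ω)]
    {d K : ℕ} (hK : 2 ≤ K)
    (y : ℕ → Ω → EuclideanSpace ℝ (Fin d))
    (hmeas : ∀ k, Measurable (y k))
    (hexch : ∀ σ : Equiv.Perm (Fin K),
      Measure.map (fun ω => fun i : Fin K => y (σ i) ω) ℙ =
        Measure.map (fun ω => fun i : Fin K => y i ω) ℙ)
    (hL2 : ∀ k, MemLp (y k) 2 ℙ)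
    (m : EuclideanSpace ℝ (Fin d)) (hm : ∀ i, m i = ∫ ω, y 0 ω i)
    (S : Matrix (Fin d) (Fin d) ℝ)
    (hS : ∀ i j, S i j = ∫ ω, (y 0 ω i - m i) * (y 0 ω j - m j))
    (hSpos : S.PosDef)
    (Scross : Matrix (Fin d) (Fin d) ℝ)
    (hScross : ∀ i j, Scross i j = ∫ ω, (y 0 ω i - m i) * (y 1 ω j - m j))
    (ρ : ℝ) (hρ : ρ = Scross.trace / S.trace)
    {μ : ℝ} (hμ : 0 < μ)
    {L : EuclideanSpace ℝ (Fin d) → ℝ}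
    (hL : ∀ x z, ∀ t ∈ Set.Icc (0 : ℝ) 1,
      L (t • x + (1 - t) • z) ≤ t * L x + (1 - t) * L z - μ * t * (1 - t) * ‖x - z‖ ^ 2)
    (hint₁ : Integrable (fun ω => L ((K : ℝ)⁻¹ • ∑ k ∈ Finset.range K, y k ω)))
    (hint₂ : Integrable
      (fun ω => L (((K : ℝ) - 1)⁻¹ • ∑ k ∈ Finset.range (K - 1), y k ω))) :
    (∫ ω, L ((K : ℝ)⁻¹ • ∑ k ∈ Finset.range K, y k ω)) ≤
      (∫ ω, L (((K : ℝ) - 1)⁻¹ • ∑ k ∈ Finset.range (K - 1), y k ω))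
        - μ / ((K : ℝ) * ((K : ℝ) - 1)) * (1 - ρ) * S.trace :=
  ensemble_strict_monotone_strongly_convex_general hK y hexch hL2 m hm S hS hSpos Scross hScross ρ
    hρ hL hint₁ hint₂
end
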